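/- arXiv:2403.16572 — 2 statements merged into one kernel-verified Lean document; each statement's English description precedes it below -/
import Mathlib

section
/- Let c, a₁ ∈ ℝ and a₀ ∈ ℂ, and set f(z) = c·e^{\overline{a₀}z}, φ(z) = a₀ + a₁z. Then the weighted composition operator W_{f,φ} satisfies W_{f,φ}K_β = W_{f,φ}*K_β for every β ∈ ℂ, i.e., f(z)e^{φ(z)\bar{β}} = \overline{f(β)}e^{\overline{φ(β)}z} for all z, β ∈ ℂ. -/
open Complex ComplexConjugate

/-- Let `c, a₁ ∈ ℝ`, `a₀ ∈ ℂ`, `f z = c e^{conj a₀ · z}`, `φ z = a₀ + a₁ z`. Then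
`W_{f,φ} K_β = W_{f,φ}* K_β` for every `β`, i.e.
`f z · e^{φ z · conj β} = conj (f β) · e^{conj (φ β) · z}` for all `z, β ∈ ℂ`. -/
theorem stmt3 (c a₁ : ℝ) (a₀ : ℂ) :
    ∀ z β : ℂ,
      ((c : ℂ) * Complex.exp ((starRingEnd ℂ) a₀ * z)) *
          Complex.exp ((a₀ + (a₁ : ℂ) * z) * (starRingEnd ℂ) β) =
        (starRingEnd ℂ) ((c : ℂ) * Complex.exp ((starRingEnd ℂ) a₀ * β)) *
          Complex.exp ((starRingEnd ℂ) (a₀ + (a₁ : ℂ) * β) * z) := by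
  intro z β
  -- Conjugation fixes the real numbers `c` and `a₁`.
  have hf : conj ((c : ℂ) * exp (conj a₀ * β)) = c * exp (a₀ * conj β) := by
    rw [map_mul, conj_ofReal, ← exp_conj, map_mul, conj_conj]
  have hφ : conj (a₀ + (a₁ : ℂ) * β) = conj a₀ + a₁ * conj β := by
    rw [map_add, map_mul, conj_ofReal]
  rw [hf, hφ, mul_assoc, mul_assoc, ← exp_add, ← exp_add]
  congr 2
  ring
end

section
/- Let φ(z) = a₀ + a₁z with a₁ real, |a₀| < 1, and fixed point b = a₀/(1-a₁) in the open unit disk, and suppose W_{f,φ} is self-adjoint on the Fock space F². Then W_{f,φ}e₀ = \overline{f(b)}·e₀, where e₀(z) = e^{\bar{b}z - |b|²/2}. -/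
open Complex

theorem add_mul_div_one_sub_self {K : Type*} [Field K] {a₀ a₁ : K} (ha₁ : a₁ ≠ 1) :
    a₀ + a₁ * (a₀ / (1 - a₁)) = a₀ / (1 - a₁) := by
  have : 1 - a₁ ≠ 0 := sub_ne_zero.mpr ha₁.symm
  field_simp
  ring

-- `hself` is self-adjointness tested on kernels: `W_{f,φ} K_β = W_{f,φ}* K_β = conj (f β) K_{φ β}`.
theorem stmt9_general (f : ℂ → ℂ) (a₁ : ℝ) (a₀ b : ℂ)
    (ha₁ : (a₁ : ℂ) ≠ 1)
    (hb : b = a₀ / (1 - (a₁ : ℂ)))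
    (hself : ∀ z β : ℂ,
      f z * Complex.exp ((a₀ + (a₁ : ℂ) * z) * (starRingEnd ℂ) β) =
        (starRingEnd ℂ) (f β) * Complex.exp ((starRingEnd ℂ) (a₀ + (a₁ : ℂ) * β) * z)) :
    ∀ z : ℂ,
      f z * Complex.exp ((starRingEnd ℂ) b * (a₀ + (a₁ : ℂ) * z) -
          (((‖b‖ : ℝ) : ℂ)) ^ 2 / 2) =
        (starRingEnd ℂ) (f b) *
          Complex.exp ((starRingEnd ℂ) b * z - (((‖b‖ : ℝ) : ℂ)) ^ 2 / 2) := by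
  intro z
  have hfix : a₀ + (a₁ : ℂ) * b = b := hb ▸ add_mul_div_one_sub_self ha₁
  -- Since `φ b = b`, the kernel identity at `β = b` is the claim multiplied by `e^{|b|²/2}`.
  have hkernel := hself z b
  rw [hfix] at hkernel
  rw [exp_sub, exp_sub, mul_comm (starRingEnd ℂ b) (a₀ + _), ← mul_div_assoc, ← mul_div_assoc,
    hkernel]

/-- Let `φ z = a₀ + a₁ z` with `a₁` real, `|a₀| < 1`, fixed point `b = a₀/(1-a₁)` in the
open unit disk, and `W_{f,φ}` self-adjoint on `F²` (expressed by the kernel identity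
`W_{f,φ} K_β = W_{f,φ}* K_β`). Then `W_{f,φ} e₀ = conj (f b) · e₀`, where
`e₀ z = e^{conj b · z - |b|²/2}` is the normalized kernel at `b`. -/
theorem stmt9 (f : ℂ → ℂ) (hf : Differentiable ℂ f) (a₁ : ℝ) (a₀ b : ℂ)
    (ha₀ : ‖a₀‖ < 1) (ha₁ : (a₁ : ℂ) ≠ 1)
    (hb : b = a₀ / (1 - (a₁ : ℂ))) (hbd : ‖b‖ < 1)
    (hself : ∀ z β : ℂ,
      f z * Complex.exp ((a₀ + (a₁ : ℂ) * z) * (starRingEnd ℂ) β) =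
        (starRingEnd ℂ) (f β) * Complex.exp ((starRingEnd ℂ) (a₀ + (a₁ : ℂ) * β) * z)) :
    ∀ z : ℂ,
      f z * Complex.exp ((starRingEnd ℂ) b * (a₀ + (a₁ : ℂ) * z) -
          (((‖b‖ : ℝ) : ℂ)) ^ 2 / 2) =
        (starRingEnd ℂ) (f b) *
          Complex.exp ((starRingEnd ℂ) b * z - (((‖b‖ : ℝ) : ℂ)) ^ 2 / 2) :=
  stmt9_general f a₁ a₀ b ha₁ hb hself
end
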